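/- A nonzero Hermitian matrix A has rank one if and only if for every Hermitian B, the strict inclusion {BCB : C Hermitian} ⊊ {ACA : C Hermitian} implies B = 0. -/

import Mathlib

open Matrix ComplexOrder

section Helpers

variable {n : ℕ}

private lemma vmv_mul (u x : Fin n → ℂ) (C : Matrix (Fin n) (Fin n) ℂ) :
    vecMulVec u x * C = vecMulVec u (x ᵥ* C) := by
  ext i j
  simp [Matrix.mul_apply, vecMulVec_apply, vecMul, dotProduct, Finset.mul_sum, mul_assoc]

private lemma mul_vmv (u x : Fin n → ℂ) (C : Matrix (Fin n) (Fin n) ℂ) :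
    C * vecMulVec u x = vecMulVec (C *ᵥ u) x := by
  ext i j
  simp [Matrix.mul_apply, vecMulVec_apply, mulVec, dotProduct, Finset.sum_mul, mul_assoc]

private lemma vmv_vmv (u x v y : Fin n → ℂ) :
    vecMulVec u x * vecMulVec v y = (x ⬝ᵥ v) • vecMulVec u y := by
  ext i j
  simp [Matrix.mul_apply, vecMulVec_apply, dotProduct, Finset.sum_mul, Finset.mul_sum]
  ring_nf
  congr 1; ext k; ring

private lemma vmv_smul_left (a : ℂ) (u x : Fin n → ℂ) :
    vecMulVec (a • u) x = a • vecMulVec u x := by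
  ext i j; simp [vecMulVec_apply, mul_assoc]

private lemma vmv_smul_right (a : ℂ) (u x : Fin n → ℂ) :
    vecMulVec u (a • x) = a • vecMulVec u x := by
  ext i j; simp [vecMulVec_apply]; ring

private lemma vmv_herm (v : Fin n → ℂ) : (vecMulVec v (star v)).IsHermitian := by
  unfold Matrix.IsHermitian
  ext i j
  simp [conjTranspose_apply, vecMulVec_apply, mul_comm]

private lemma vmv_sandwich (v w : Fin n → ℂ) (C : Matrix (Fin n) (Fin n) ℂ) :
    vecMulVec v w * C * vecMulVec v w = (w ⬝ᵥ C *ᵥ v) • vecMulVec v w := by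
  rw [vmv_mul, vmv_vmv, ← dotProduct_mulVec]

private lemma vmv_rank_le_one (v w : Fin n → ℂ) : (vecMulVec v w).rank ≤ 1 := by
  rw [vecMulVec_eq Unit]
  exact le_trans (rank_mul_le_left _ _) (le_trans (rank_le_card_width _) (by simp))

private lemma herm_quad {C : Matrix (Fin n) (Fin n) ℂ} (hC : C.IsHermitian) (v : Fin n → ℂ) :
    star (star v ⬝ᵥ C *ᵥ v) = star v ⬝ᵥ C *ᵥ v := by
  conv_lhs => rw [star_dotProduct, star_star, star_mulVec, hC.eq]
  exact (dotProduct_mulVec _ _ _).symm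

private lemma exists_sandwich {B : Matrix (Fin n) (Fin n) ℂ} (hB : B.IsHermitian) :
    ∃ C : Matrix (Fin n) (Fin n) ℂ, C.IsHermitian ∧ B = B * C * B := by
  set U : Matrix (Fin n) (Fin n) ℂ := (hB.eigenvectorUnitary : Matrix (Fin n) (Fin n) ℂ) with hU
  have hUU' : star U * U = 1 := (Matrix.mem_unitaryGroup_iff').mp hB.eigenvectorUnitary.2
  have hcancel : ∀ X : Matrix (Fin n) (Fin n) ℂ, star U * (U * X) = X := by
    intro X; rw [← mul_assoc, hUU', one_mul]
  have key : ∀ D D' : Matrix (Fin n) (Fin n) ℂ,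
      (U * D * star U) * (U * D' * star U) = U * (D * D') * star U := by
    intro D D'
    simp only [mul_assoc]
    rw [hcancel]
  set d : Fin n → ℂ := fun i => (((hB.eigenvalues i)⁻¹ : ℝ) : ℂ) with hd
  have hdstar : star d = d := by
    funext i; simp [hd]
  have hdd : (diagonal (Complex.ofReal ∘ hB.eigenvalues) * diagonal d) *
      diagonal (Complex.ofReal ∘ hB.eigenvalues) = diagonal (Complex.ofReal ∘ hB.eigenvalues) := by
    rw [diagonal_mul_diagonal, diagonal_mul_diagonal]
    ext i j
    rcases eq_or_ne i j with rfl | hij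
    · simp only [diagonal_apply_eq, Function.comp_apply, hd]
      rcases eq_or_ne (hB.eigenvalues i) 0 with h | h
      · simp [h]
      · have h' : (hB.eigenvalues i : ℂ) ≠ 0 := by exact_mod_cast h
        push_cast
        field_simp
    · simp [diagonal_apply_ne _ hij]
  refine ⟨U * diagonal d * star U, ?_, ?_⟩
  · unfold Matrix.IsHermitian
    simp only [conjTranspose_mul, conjTranspose_conjTranspose, diagonal_conjTranspose, hdstar,
      star_eq_conjTranspose, mul_assoc]
  · rw [hB.spectral_theorem, Unitary.conjStarAlgAut_apply, key, key]
    rw [show (RCLike.ofReal ∘ hB.eigenvalues : Fin n → ℂ) = Complex.ofReal ∘ hB.eigenvalues from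
      rfl, hdd]

private lemma herm_structure {A : Matrix (Fin n) (Fin n) ℂ} (hA : A.IsHermitian) (i0 : Fin n)
    (h : ∀ j, j ≠ i0 → hA.eigenvalues j = 0) :
    A = ((hA.eigenvalues i0 : ℝ) : ℂ) •
      vecMulVec (fun i => (hA.eigenvectorUnitary : Matrix (Fin n) (Fin n) ℂ) i i0)
        (star fun i => (hA.eigenvectorUnitary : Matrix (Fin n) (Fin n) ℂ) i i0) := by
  set U : Matrix (Fin n) (Fin n) ℂ := (hA.eigenvectorUnitary : Matrix (Fin n) (Fin n) ℂ) with hU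
  conv_lhs => rw [hA.spectral_theorem, Unitary.conjStarAlgAut_apply]
  ext i j
  rw [Matrix.mul_apply]
  rw [Finset.sum_eq_single i0]
  · simp [Matrix.mul_diagonal, vecMulVec_apply, star_eq_conjTranspose, conjTranspose_apply,
      Pi.star_apply, hU, Matrix.IsHermitian.eigenvectorUnitary_apply]
    ring
  · intro l _ hl
    simp [Matrix.mul_diagonal, h l hl]
  · simp

end Helpers

theorem rank_one_iff_triple_products {n : ℕ} (hn : 2 ≤ n) {A : Matrix (Fin n) (Fin n) ℂ}
    (hA : A.IsHermitian) (hA0 : A ≠ 0) :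
    A.rank = 1 ↔
      ∀ B : Matrix (Fin n) (Fin n) ℂ, B.IsHermitian →
        {X | ∃ C : Matrix (Fin n) (Fin n) ℂ, C.IsHermitian ∧ X = B * C * B} ⊂
          {X | ∃ C : Matrix (Fin n) (Fin n) ℂ, C.IsHermitian ∧ X = A * C * A} →
        B = 0 := by
  constructor
  · -- forward direction
    intro hrank B hB hss
    by_contra hB0
    have hcard : Fintype.card {i // hA.eigenvalues i ≠ 0} = 1 :=
      hA.rank_eq_card_non_zero_eigs ▸ hrank
    obtain ⟨⟨i0, hi0⟩, huniq⟩ := Fintype.card_eq_one_iff.mp hcard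
    have hzero : ∀ j, j ≠ i0 → hA.eigenvalues j = 0 := by
      intro j hj
      by_contra hj0
      exact hj (congrArg Subtype.val (huniq ⟨j, hj0⟩))
    set v : Fin n → ℂ := fun i => (hA.eigenvectorUnitary : Matrix (Fin n) (Fin n) ℂ) i i0 with hv
    set c : ℂ := ((hA.eigenvalues i0 : ℝ) : ℂ) with hc
    have hc0 : c ≠ 0 := by
      simpa [hc] using hi0
    have hcstar : star c = c := by simp [hc, Complex.conj_ofReal]
    set P : Matrix (Fin n) (Fin n) ℂ := vecMulVec v (star v) with hPdef
    have hAP : A = c • P := herm_structure hA i0 hzero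
    have hP0 : P ≠ 0 := by
      intro h0
      exact hA0 (by rw [hAP, h0, smul_zero])
    have keyA : ∀ C : Matrix (Fin n) (Fin n) ℂ,
        A * C * A = (c * c * (star v ⬝ᵥ C *ᵥ v)) • P := by
      intro C
      rw [hAP, smul_mul_assoc, smul_mul_assoc, mul_smul_comm, vmv_sandwich, smul_smul, smul_smul,
        mul_assoc]
    -- B ∈ S(B) ⊆ S(A)
    obtain ⟨C1, hC1, hBC1⟩ := exists_sandwich hB
    obtain ⟨C0, hC0, hBeq⟩ := hss.1 ⟨C1, hC1, hBC1⟩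
    rw [keyA] at hBeq
    set s : ℂ := c * c * (star v ⬝ᵥ C0 *ᵥ v) with hs
    have hs0 : s ≠ 0 := by
      intro h0
      exact hB0 (by rw [hBeq, h0, zero_smul])
    have hsstar : star s = s := by
      have h1 : star s • P = s • P := by
        have := hB.eq
        rw [hBeq] at this
        rw [Matrix.conjTranspose_smul, (vmv_herm v).eq] at this
        exact this
      have h2 : (star s - s) • P = 0 := by rw [sub_smul, h1, sub_self]
      rcases smul_eq_zero.mp h2 with h | h
      · exact sub_eq_zero.mp h
      · exact absurd h hP0
    -- Show S(A) ⊆ S(B), contradicting strictness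
    apply hss.2
    rintro X ⟨C, hC, rfl⟩
    set t : ℂ := star v ⬝ᵥ C *ᵥ v with ht
    set r : ℂ := (c * c) / (s * s) with hr
    have hrstar : star r = r := by
      rw [hr, star_div₀, star_mul', star_mul', hcstar, hsstar]
    refine ⟨r • C, ?_, ?_⟩
    · unfold Matrix.IsHermitian
      rw [Matrix.conjTranspose_smul, hrstar, hC.eq]
    · have hBsand : ∀ C' : Matrix (Fin n) (Fin n) ℂ,
          B * C' * B = (s * s * (star v ⬝ᵥ C' *ᵥ v)) • P := by
        intro C'
        rw [hBeq, smul_mul_assoc, smul_mul_assoc, mul_smul_comm, vmv_sandwich, smul_smul,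
          smul_smul, mul_assoc]
      rw [keyA, hBsand, smul_mulVec, dotProduct_smul]
      congr 1
      rw [hr, smul_eq_mul]
      field_simp
  · -- reverse direction
    intro hyp
    by_contra hrne
    obtain ⟨v, α, hα0, hv0, hAv⟩ := hA.exists_eigenvector_of_ne_zero hA0
    have hrank2 : 2 ≤ A.rank := by
      have hcard := hA.rank_eq_card_non_zero_eigs
      have h1 : 0 < A.rank := by
        rcases Nat.eq_zero_or_pos A.rank with h | h
        · exfalso
          rw [hcard] at h
          have : Nonempty {i // hA.eigenvalues i ≠ 0} := by
            by_contra hne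
            apply hA0
            rw [hA.spectral_theorem, Unitary.conjStarAlgAut_apply]
            have hall : ∀ i, hA.eigenvalues i = 0 := by
              intro i
              by_contra hi
              exact hne ⟨⟨i, hi⟩⟩
            have : diagonal (RCLike.ofReal ∘ hA.eigenvalues) = (0 : Matrix (Fin n) (Fin n) ℂ) := by
              ext i j
              rcases eq_or_ne i j with rfl | hij
              · simp [hall i]
              · simp [diagonal_apply_ne _ hij]
            rw [this, mul_zero, zero_mul]
          rw [Fintype.card_eq_zero_iff] at h
          exact h.false (Classical.arbitrary _)
        · exact h
      omega
    have hAvc : A *ᵥ v = (α : ℂ) • v := by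
      rw [hAv]
      funext j
      simp [Pi.smul_apply, Complex.real_smul]
    set B : Matrix (Fin n) (Fin n) ℂ := vecMulVec v (star v) with hBdef
    have hB0 : B ≠ 0 := by
      intro h0
      obtain ⟨j, hj⟩ := Function.ne_iff.mp hv0
      have : B j j = 0 := by rw [h0]; rfl
      rw [hBdef] at this
      simp [vecMulVec_apply] at this
      exact hj this
    have hαc : ((α : ℝ) : ℂ) ≠ 0 := by exact_mod_cast hα0
    apply hB0
    apply hyp B (vmv_herm v)
    constructor
    · -- S(B) ⊆ S(A)
      rintro X ⟨C, hC, rfl⟩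
      set t : ℂ := star v ⬝ᵥ C *ᵥ v with ht
      have htstar : star t = t := herm_quad hC v
      set r : ℂ := t / ((α : ℂ) * (α : ℂ)) with hr
      have hrstar : star r = r := by
        rw [hr, star_div₀, star_mul', htstar]
        simp [Complex.star_def, Complex.conj_ofReal]
      refine ⟨r • B, ?_, ?_⟩
      · unfold Matrix.IsHermitian
        rw [Matrix.conjTranspose_smul, hrstar, (vmv_herm v).eq]
      · -- A * (r • B) * A = B * C * B
        have hstarvA : star v ᵥ* A = (α : ℂ) • star v := by
          have h1 : star (A *ᵥ v) = star v ᵥ* Aᴴ := star_mulVec A v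
          rw [hA.eq] at h1
          rw [← h1, hAvc]
          funext j
          simp [Complex.conj_ofReal]
        have hABA : A * B * A = ((α : ℂ) * (α : ℂ)) • B := by
          rw [hBdef, mul_vmv, hAvc, vmv_smul_left, smul_mul_assoc, vmv_mul, hstarvA,
            vmv_smul_right, smul_smul]
        symm
        calc A * (r • B) * A = r • (A * B * A) := by
              rw [mul_smul_comm, smul_mul_assoc]
          _ = (r * ((α : ℂ) * (α : ℂ))) • B := by rw [hABA, smul_smul]
          _ = t • B := by rw [hr]; congr 1; field_simp
          _ = B * C * B := by rw [hBdef, vmv_sandwich, ← ht]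
    · -- ¬ S(A) ⊆ S(B)
      intro hsub
      obtain ⟨C, hC, hX⟩ := hsub ⟨1, Matrix.isHermitian_one, rfl⟩
      have h1 : (A * 1 * A).rank = A.rank := by
        rw [mul_one, show A * A = Aᴴ * A by rw [hA.eq], rank_conjTranspose_mul_self]
      have h2 : (B * C * B).rank ≤ 1 := by
        rw [hBdef, vmv_sandwich, ← vmv_smul_left]
        exact vmv_rank_le_one _ _
      rw [← hX, h1] at h2
      omega
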